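/- Let v_1,...,v_N be arbitrary real numbers, β_0 = 0, β_1,...,β_{N−1} real constants, v = v_1 + ⋯ + v_N, and P(λ) = tr (V_N(λ + β_{N−1}) ⋯ V_1(λ)). If N = 2g + 1 is odd, then the coefficient I_0 of λ^g in P(λ) equals 2v. If N = 2g + 2 is even, then the coefficient I_0 of λ^g in P(λ) equals v² + Σ_{n=1}^{2g+1} β_n. -/
import Mathlib


open Polynomial in
/-- The matrix V_n(λ + b) with polynomial entries: rows (v_n, 1), (λ + b + v_n², v_n). -/
noncomputable def polyV (w b : ℝ) : Matrix (Fin 2) (Fin 2) (Polynomial ℝ) :=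
  !![C w, 1; X + C b + C (w ^ 2), C w]

/-- Partial transition matrix with polynomial entries:
`polyT v β k = V_k(λ+β_{k-1}) ⋯ V_2(λ+β_1) V_1(λ+β_0)`. -/
noncomputable def polyT (v β : ℕ → ℝ) : ℕ → Matrix (Fin 2) (Fin 2) (Polynomial ℝ)
  | 0 => 1
  | k + 1 => polyV (v (k + 1)) (β k) * polyT v β k

open Polynomial

lemma mul00 (w b : ℝ) (T : Matrix (Fin 2) (Fin 2) (Polynomial ℝ)) :
    (polyV w b * T) 0 0 = C w * T 0 0 + T 1 0 := by
  simp [polyV, Matrix.mul_apply, Fin.sum_univ_two]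

lemma mul01 (w b : ℝ) (T : Matrix (Fin 2) (Fin 2) (Polynomial ℝ)) :
    (polyV w b * T) 0 1 = C w * T 0 1 + T 1 1 := by
  simp [polyV, Matrix.mul_apply, Fin.sum_univ_two]

lemma mul10 (w b : ℝ) (T : Matrix (Fin 2) (Fin 2) (Polynomial ℝ)) :
    (polyV w b * T) 1 0 = (X + C b + C (w ^ 2)) * T 0 0 + C w * T 1 0 := by
  simp [polyV, Matrix.mul_apply, Fin.sum_univ_two]

lemma mul11 (w b : ℝ) (T : Matrix (Fin 2) (Fin 2) (Polynomial ℝ)) :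
    (polyV w b * T) 1 1 = (X + C b + C (w ^ 2)) * T 0 1 + C w * T 1 1 := by
  simp [polyV, Matrix.mul_apply, Fin.sum_univ_two]

lemma coeff_row0 (w : ℝ) (p q : Polynomial ℝ) (d : ℕ) :
    (C w * p + q).coeff d = w * p.coeff d + q.coeff d := by
  simp [coeff_add, coeff_C_mul]

lemma coeff_row1 (w b : ℝ) (p q : Polynomial ℝ) (e : ℕ) :
    ((X + C b + C (w ^ 2)) * p + C w * q).coeff (e + 1)
      = p.coeff e + (b + w ^ 2) * p.coeff (e + 1) + w * q.coeff (e + 1) := by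
  rw [show (C (w ^ 2) : Polynomial ℝ) = C (w ^ 2) from rfl]
  simp only [add_mul, coeff_add, coeff_C_mul, coeff_X_mul]
  ring

lemma coeff_row1_zero (w b : ℝ) (p q : Polynomial ℝ) :
    ((X + C b + C (w ^ 2)) * p + C w * q).coeff 0
      = (b + w ^ 2) * p.coeff 0 + w * q.coeff 0 := by
  simp only [add_mul, coeff_add, mul_coeff_zero, coeff_X_zero, zero_mul, coeff_C_zero,
    coeff_C_mul]
  ring

lemma deg_row0 {p q : Polynomial ℝ} {n : ℕ} (w : ℝ) (hp : p.natDegree ≤ n)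
    (hq : q.natDegree ≤ n) : (C w * p + q).natDegree ≤ n :=
  (natDegree_add_le _ _).trans (max_le ((natDegree_C_mul_le _ _).trans hp) hq)

lemma deg_row1 {p q : Polynomial ℝ} {n : ℕ} (w b : ℝ) (hp : p.natDegree ≤ n)
    (hq : q.natDegree ≤ n + 1) :
    ((X + C b + C (w ^ 2)) * p + C w * q).natDegree ≤ n + 1 := by
  apply (natDegree_add_le _ _).trans
  apply max_le _ ((natDegree_C_mul_le _ _).trans hq)
  apply (natDegree_mul_le).trans
  have h1 : (X + C b + C (w ^ 2) : Polynomial ℝ).natDegree ≤ 1 := by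
    compute_degree
  omega

lemma polyT_inv (v β : ℕ → ℝ) (hβ0 : β 0 = 0) : ∀ m : ℕ, 1 ≤ m →
    (polyT v β (2 * m + 1) 0 0).natDegree ≤ m ∧
    (polyT v β (2 * m + 1) 0 1).natDegree ≤ m ∧
    (polyT v β (2 * m + 1) 1 0).natDegree ≤ m + 1 ∧
    (polyT v β (2 * m + 1) 1 1).natDegree ≤ m ∧
    (polyT v β (2 * m + 1) 0 0).coeff m = ∑ n ∈ Finset.Icc 1 (2 * m + 1), v n ∧
    (polyT v β (2 * m + 1) 0 1).coeff m = 1 ∧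
    (polyT v β (2 * m + 1) 1 0).coeff (m + 1) = 1 ∧
    (polyT v β (2 * m + 1) 1 1).coeff m = ∑ n ∈ Finset.Icc 1 (2 * m + 1), v n ∧
    (polyT v β (2 * m + 1) 0 1).coeff (m - 1) + (polyT v β (2 * m + 1) 1 0).coeff m
      = (∑ n ∈ Finset.Icc 1 (2 * m + 1), v n) ^ 2 + ∑ n ∈ Finset.Icc 1 (2 * m), β n := by
  intro m hm
  induction m, hm using Nat.le_induction with
  | base =>
    show (polyT v β 3 0 0).natDegree ≤ 1 ∧ (polyT v β 3 0 1).natDegree ≤ 1 ∧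
      (polyT v β 3 1 0).natDegree ≤ 2 ∧ (polyT v β 3 1 1).natDegree ≤ 1 ∧
      (polyT v β 3 0 0).coeff 1 = ∑ n ∈ Finset.Icc 1 3, v n ∧
      (polyT v β 3 0 1).coeff 1 = 1 ∧ (polyT v β 3 1 0).coeff 2 = 1 ∧
      (polyT v β 3 1 1).coeff 1 = ∑ n ∈ Finset.Icc 1 3, v n ∧
      (polyT v β 3 0 1).coeff 0 + (polyT v β 3 1 0).coeff 1
        = (∑ n ∈ Finset.Icc 1 3, v n) ^ 2 + ∑ n ∈ Finset.Icc 1 2, β n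
    have hT0 : polyT v β 0 = 1 := rfl
    have hT1 : polyT v β 1 = polyV (v 1) (β 0) := by
      show polyV (v 1) (β 0) * polyT v β 0 = _
      rw [hT0, mul_one]
    have e00 : polyT v β 1 0 0 = C (v 1) := by rw [hT1]; simp [polyV]
    have e01 : polyT v β 1 0 1 = 1 := by rw [hT1]; simp [polyV]
    have e10 : polyT v β 1 1 0 = X + C (v 1 ^ 2) := by
      rw [hT1]; simp [polyV, hβ0]
    have e11 : polyT v β 1 1 1 = C (v 1) := by rw [hT1]; simp [polyV]
    set w1 := v 2; set b1 := β 1; set w2 := v 3; set b2 := β 2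
    have hT2 : polyT v β 2 = polyV w1 b1 * polyT v β 1 := rfl
    have hT3 : polyT v β 3 = polyV w2 b2 * polyT v β 2 := rfl
    -- k = 1 facts
    have dA : (polyT v β 1 0 0).natDegree ≤ 0 := by rw [e00]; exact (natDegree_C _).le
    have dB : (polyT v β 1 0 1).natDegree ≤ 0 := by rw [e01]; simp
    have dC : (polyT v β 1 1 0).natDegree ≤ 1 := by rw [e10]; compute_degree
    have dD : (polyT v β 1 1 1).natDegree ≤ 0 := by rw [e11]; exact (natDegree_C _).le
    have cA : (polyT v β 1 0 0).coeff 0 = v 1 := by rw [e00]; simp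
    have cAtop : (polyT v β 1 0 0).coeff 1 = 0 := by rw [e00]; simp only [coeff_C]; norm_num
    have cB : (polyT v β 1 0 1).coeff 0 = 1 := by rw [e01]; simp
    have cBtop : (polyT v β 1 0 1).coeff 1 = 0 := by rw [e01]; simp [coeff_one]
    have cC1 : (polyT v β 1 1 0).coeff 1 = 1 := by
      rw [e10]; simp only [coeff_add, coeff_X_one, coeff_C]; norm_num
    have cC0 : (polyT v β 1 1 0).coeff 0 = v 1 ^ 2 := by
      rw [e10]; simp only [coeff_add, coeff_X_zero, coeff_C_zero]; ring
    have cD : (polyT v β 1 1 1).coeff 0 = v 1 := by rw [e11]; simp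
    have cDtop : (polyT v β 1 1 1).coeff 1 = 0 := by rw [e11]; simp only [coeff_C]; norm_num
    -- k = 2 entries
    have f00 : polyT v β 2 0 0 = C w1 * polyT v β 1 0 0 + polyT v β 1 1 0 := by
      rw [hT2, mul00]
    have f01 : polyT v β 2 0 1 = C w1 * polyT v β 1 0 1 + polyT v β 1 1 1 := by
      rw [hT2, mul01]
    have f10 : polyT v β 2 1 0
        = (X + C b1 + C (w1 ^ 2)) * polyT v β 1 0 0 + C w1 * polyT v β 1 1 0 := by
      rw [hT2, mul10]
    have f11 : polyT v β 2 1 1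
        = (X + C b1 + C (w1 ^ 2)) * polyT v β 1 0 1 + C w1 * polyT v β 1 1 1 := by
      rw [hT2, mul11]
    have dA' : (polyT v β 2 0 0).natDegree ≤ 1 := by
      rw [f00]; exact deg_row0 _ (dA.trans (by omega)) dC
    have dB' : (polyT v β 2 0 1).natDegree ≤ 0 := by
      rw [f01]; exact deg_row0 _ dB dD
    have dC' : (polyT v β 2 1 0).natDegree ≤ 1 := by
      rw [f10]; exact deg_row1 _ _ dA dC
    have dD' : (polyT v β 2 1 1).natDegree ≤ 1 := by
      rw [f11]; exact deg_row1 _ _ dB (dD.trans (by omega))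
    have cA'1 : (polyT v β 2 0 0).coeff 1 = 1 := by
      rw [f00, coeff_row0, cAtop, cC1]; ring
    have cA'0 : (polyT v β 2 0 0).coeff 0 = w1 * v 1 + v 1 ^ 2 := by
      rw [f00, coeff_row0, cA, cC0]
    have cA'2 : (polyT v β 2 0 0).coeff (1 + 1) = 0 :=
      coeff_eq_zero_of_natDegree_lt (by omega)
    have cB'1 : (polyT v β 2 0 1).coeff 1 = 0 :=
      coeff_eq_zero_of_natDegree_lt (by omega)
    have cB'0 : (polyT v β 2 0 1).coeff 0 = w1 + v 1 := by
      rw [f01, coeff_row0, cB, cD]; ring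
    have cC'1 : (polyT v β 2 1 0).coeff 1 = v 1 + w1 := by
      have h := coeff_row1 w1 b1 (polyT v β 1 0 0) (polyT v β 1 1 0) 0
      simp only [Nat.reduceAdd, zero_add] at h
      rw [f10, h, cA, cAtop, cC1]; ring
    have cC'2 : (polyT v β 2 1 0).coeff (1 + 1) = 0 :=
      coeff_eq_zero_of_natDegree_lt (by omega)
    have cD'1 : (polyT v β 2 1 1).coeff 1 = 1 := by
      have h := coeff_row1 w1 b1 (polyT v β 1 0 1) (polyT v β 1 1 1) 0
      simp only [Nat.reduceAdd, zero_add] at h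
      rw [f11, h, cB, cBtop, cDtop]; ring
    have cD'0 : (polyT v β 2 1 1).coeff 0 = (b1 + w1 ^ 2) + w1 * v 1 := by
      rw [f11, coeff_row1_zero, cB, cD]; ring
    -- k = 3 entries
    have g00 : polyT v β 3 0 0 = C w2 * polyT v β 2 0 0 + polyT v β 2 1 0 := by
      rw [hT3, mul00]
    have g01 : polyT v β 3 0 1 = C w2 * polyT v β 2 0 1 + polyT v β 2 1 1 := by
      rw [hT3, mul01]
    have g10 : polyT v β 3 1 0
        = (X + C b2 + C (w2 ^ 2)) * polyT v β 2 0 0 + C w2 * polyT v β 2 1 0 := by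
      rw [hT3, mul10]
    have g11 : polyT v β 3 1 1
        = (X + C b2 + C (w2 ^ 2)) * polyT v β 2 0 1 + C w2 * polyT v β 2 1 1 := by
      rw [hT3, mul11]
    have hsum3 : ∑ n ∈ Finset.Icc 1 3, v n = v 1 + w1 + w2 := by
      rw [show (3 : ℕ) = 1 + 1 + 1 from rfl, Finset.sum_Icc_succ_top (by omega),
        Finset.sum_Icc_succ_top (by omega), Finset.Icc_self, Finset.sum_singleton]
    have hsumb : ∑ n ∈ Finset.Icc 1 2, β n = b1 + b2 := by
      rw [show (2 : ℕ) = 1 + 1 from rfl, Finset.sum_Icc_succ_top (by omega),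
        Finset.Icc_self, Finset.sum_singleton]
    refine ⟨?_, ?_, ?_, ?_, ?_, ?_, ?_, ?_, ?_⟩
    · rw [g00]; exact deg_row0 _ dA' dC'
    · rw [g01]; exact deg_row0 _ (dB'.trans (by omega)) dD'
    · rw [g10]; exact deg_row1 _ _ dA' (dC'.trans (by omega))
    · rw [g11]; exact deg_row1 _ _ (dB'.trans (by omega)) dD'
    · rw [g00, coeff_row0, cA'1, cC'1, hsum3]; ring
    · rw [g01, coeff_row0, cB'1, cD'1]; ring
    · have h := coeff_row1 w2 b2 (polyT v β 2 0 0) (polyT v β 2 1 0) 1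
      simp only [Nat.reduceAdd] at h cA'2 cC'2
      rw [g10, h, cA'1, cA'2, cC'2]; ring
    · have h := coeff_row1 w2 b2 (polyT v β 2 0 1) (polyT v β 2 1 1) 0
      simp only [Nat.reduceAdd, zero_add] at h
      rw [g11, h, cB'0, cB'1, cD'1, hsum3]; ring
    · have h := coeff_row1 w2 b2 (polyT v β 2 0 0) (polyT v β 2 1 0) 0
      simp only [Nat.reduceAdd, zero_add] at h
      rw [g01, g10, coeff_row0, h, cB'0, cD'0, cA'0, cA'1, cC'1, hsum3, hsumb]
      ring
  | succ m hm ih =>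
    obtain ⟨dA, dB, dC, dD, cA, cB, cC, cD, cS⟩ := ih
    set k := 2 * m + 1 with hk
    have hk2 : 2 * (m + 1) + 1 = k + 1 + 1 := by omega
    rw [hk2]
    set w1 := v (k + 1); set b1 := β k; set w2 := v (k + 1 + 1); set b2 := β (k + 1)
    set A := polyT v β k 0 0; set B := polyT v β k 0 1
    set Cc := polyT v β k 1 0; set D := polyT v β k 1 1
    have hT1 : polyT v β (k + 1) = polyV w1 b1 * polyT v β k := rfl
    have hT2 : polyT v β (k + 1 + 1) = polyV w2 b2 * polyT v β (k + 1) := rfl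
    -- even-level entries
    have e00 : polyT v β (k + 1) 0 0 = C w1 * A + Cc := by rw [hT1, mul00]
    have e01 : polyT v β (k + 1) 0 1 = C w1 * B + D := by rw [hT1, mul01]
    have e10 : polyT v β (k + 1) 1 0 = (X + C b1 + C (w1 ^ 2)) * A + C w1 * Cc := by
      rw [hT1, mul10]
    have e11 : polyT v β (k + 1) 1 1 = (X + C b1 + C (w1 ^ 2)) * B + C w1 * D := by
      rw [hT1, mul11]
    -- even-level degree bounds
    have dA' : (polyT v β (k + 1) 0 0).natDegree ≤ m + 1 := by
      rw [e00]; exact deg_row0 _ (dA.trans (by omega)) dC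
    have dB' : (polyT v β (k + 1) 0 1).natDegree ≤ m := by
      rw [e01]; exact deg_row0 _ dB dD
    have dC' : (polyT v β (k + 1) 1 0).natDegree ≤ m + 1 := by
      rw [e10]; exact deg_row1 _ _ dA (dC.trans (by omega))
    have dD' : (polyT v β (k + 1) 1 1).natDegree ≤ m + 1 := by
      rw [e11]; exact deg_row1 _ _ dB (dD.trans (by omega))
    -- even-level coefficients
    set s := ∑ n ∈ Finset.Icc 1 k, v n with hs
    have cAtop : A.coeff (m + 1) = 0 := coeff_eq_zero_of_natDegree_lt (by omega)
    have cAtop2 : A.coeff (m + 2) = 0 := coeff_eq_zero_of_natDegree_lt (by omega)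
    have cBtop : B.coeff (m + 1) = 0 := coeff_eq_zero_of_natDegree_lt (by omega)
    have cCtop : Cc.coeff (m + 2) = 0 := coeff_eq_zero_of_natDegree_lt (by omega)
    have cDtop : D.coeff (m + 1) = 0 := coeff_eq_zero_of_natDegree_lt (by omega)
    have cA'1 : (polyT v β (k + 1) 0 0).coeff (m + 1) = 1 := by
      rw [e00, coeff_row0, cAtop, cC]; ring
    have cA'0 : (polyT v β (k + 1) 0 0).coeff m = w1 * s + Cc.coeff m := by
      rw [e00, coeff_row0, cA]
    have cA'2 : (polyT v β (k + 1) 0 0).coeff (m + 1 + 1) = 0 :=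
      coeff_eq_zero_of_natDegree_lt (by omega)
    have cB'1 : (polyT v β (k + 1) 0 1).coeff (m + 1) = 0 :=
      coeff_eq_zero_of_natDegree_lt (by omega)
    have cB'0 : (polyT v β (k + 1) 0 1).coeff m = w1 + s := by
      rw [e01, coeff_row0, cB, cD]; ring
    have cC'1 : (polyT v β (k + 1) 1 0).coeff (m + 1) = s + w1 := by
      rw [e10, coeff_row1, cA, cAtop, cC]; ring
    have cC'2 : (polyT v β (k + 1) 1 0).coeff (m + 1 + 1) = 0 :=
      coeff_eq_zero_of_natDegree_lt (by omega)
    have cD'1 : (polyT v β (k + 1) 1 1).coeff (m + 1) = 1 := by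
      rw [e11, coeff_row1, cB, cBtop, cDtop]; ring
    have cD'0 : (polyT v β (k + 1) 1 1).coeff m
        = B.coeff (m - 1) + (b1 + w1 ^ 2) + w1 * s := by
      obtain ⟨e, he⟩ : ∃ e, m = e + 1 := ⟨m - 1, by omega⟩
      subst he
      rw [e11, coeff_row1, cB, cD]
      simp
    -- odd-level entries at k + 2
    have f00 : polyT v β (k + 1 + 1) 0 0
        = C w2 * (polyT v β (k + 1) 0 0) + polyT v β (k + 1) 1 0 := by rw [hT2, mul00]
    have f01 : polyT v β (k + 1 + 1) 0 1
        = C w2 * (polyT v β (k + 1) 0 1) + polyT v β (k + 1) 1 1 := by rw [hT2, mul01]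
    have f10 : polyT v β (k + 1 + 1) 1 0
        = (X + C b2 + C (w2 ^ 2)) * (polyT v β (k + 1) 0 0)
          + C w2 * (polyT v β (k + 1) 1 0) := by rw [hT2, mul10]
    have f11 : polyT v β (k + 1 + 1) 1 1
        = (X + C b2 + C (w2 ^ 2)) * (polyT v β (k + 1) 0 1)
          + C w2 * (polyT v β (k + 1) 1 1) := by rw [hT2, mul11]
    -- sums
    have hs' : ∑ n ∈ Finset.Icc 1 (k + 1 + 1), v n = s + w1 + w2 := by
      rw [hs, Finset.sum_Icc_succ_top (by omega), Finset.sum_Icc_succ_top (by omega)]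
    have hb' : ∑ n ∈ Finset.Icc 1 (2 * (m + 1)), β n
        = (∑ n ∈ Finset.Icc 1 (2 * m), β n) + b1 + b2 := by
      rw [show 2 * (m + 1) = (2 * m + 1) + 1 by omega,
        Finset.sum_Icc_succ_top (by omega), Finset.sum_Icc_succ_top (by omega)]
    refine ⟨?_, ?_, ?_, ?_, ?_, ?_, ?_, ?_, ?_⟩
    · rw [f00]; exact deg_row0 _ dA' dC'
    · rw [f01]; exact deg_row0 _ (dB'.trans (by omega)) dD'
    · rw [f10]; exact deg_row1 _ _ dA' (dC'.trans (by omega))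
    · rw [f11]; exact deg_row1 _ _ (dB'.trans (by omega)) dD'
    · rw [f00, coeff_row0, cA'1, cC'1, hs']; ring
    · rw [f01, coeff_row0, cB'1, cD'1]; ring
    · rw [f10, coeff_row1, cA'1, cA'2, cC'2]
      ring
    · rw [f11, coeff_row1, cB'0, cB'1, cD'1, hs']; ring
    · rw [show m + 1 - 1 = m from rfl, f01, f10, coeff_row0, coeff_row1,
        cB'0, cD'0, cA'0, cA'1, cC'1, hs', hb']
      linear_combination cS

/-- the coefficient I₀ of λ^g in P(λ) = tr T(λ) equals 2v for N = 2g+1 and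
v² + Σ_{n=1}^{2g+1} β_n for N = 2g+2, where v = v_1 + ⋯ + v_N. -/
theorem transition_matrix_I0 (N : ℕ) (hN : 3 ≤ N) (v β : ℕ → ℝ) (hβ0 : β 0 = 0) :
    (∀ g : ℕ, N = 2 * g + 1 →
      (Matrix.trace (polyT v β N)).coeff g = 2 * ∑ n ∈ Finset.Icc 1 N, v n) ∧
    (∀ g : ℕ, N = 2 * g + 2 →
      (Matrix.trace (polyT v β N)).coeff g
        = (∑ n ∈ Finset.Icc 1 N, v n) ^ 2 + ∑ n ∈ Finset.Icc 1 (2 * g + 1), β n) := by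
  constructor
  · intro g hg
    subst hg
    obtain ⟨-, -, -, -, cA, -, -, cD, -⟩ := polyT_inv v β hβ0 g (by omega)
    rw [Matrix.trace_fin_two, coeff_add, cA, cD]
    ring
  · intro g hg
    subst hg
    obtain ⟨e, rfl⟩ : ∃ e, g = e + 1 := ⟨g - 1, by omega⟩
    obtain ⟨dA, dB, dC, dD, cA, cB, cC, cD, cS⟩ := polyT_inv v β hβ0 (e + 1) (by omega)
    set k := 2 * (e + 1) + 1 with hk
    have hT : polyT v β (2 * (e + 1) + 2) = polyV (v (k + 1)) (β k) * polyT v β k := by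
      rw [show 2 * (e + 1) + 2 = k + 1 by omega]
      rfl
    set w1 := v (k + 1); set b1 := β k
    set A := polyT v β k 0 0; set B := polyT v β k 0 1
    set Cc := polyT v β k 1 0; set D := polyT v β k 1 1
    set s := ∑ n ∈ Finset.Icc 1 k, v n with hs
    have e00 : polyT v β (2 * (e + 1) + 2) 0 0 = C w1 * A + Cc := by rw [hT, mul00]
    have e11 : polyT v β (2 * (e + 1) + 2) 1 1
        = (X + C b1 + C (w1 ^ 2)) * B + C w1 * D := by rw [hT, mul11]
    have cBtop : B.coeff (e + 1 + 1) = 0 := coeff_eq_zero_of_natDegree_lt (by omega)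
    have hsv : ∑ n ∈ Finset.Icc 1 (2 * (e + 1) + 2), v n = s + w1 := by
      rw [hs, show 2 * (e + 1) + 2 = k + 1 by omega, Finset.sum_Icc_succ_top (by omega)]
    have hsb : ∑ n ∈ Finset.Icc 1 (2 * (e + 1) + 1), β n
        = (∑ n ∈ Finset.Icc 1 (2 * (e + 1)), β n) + b1 := by
      rw [show (2 * (e + 1) + 1 : ℕ) = 2 * (e + 1) + 1 from rfl,
        Finset.sum_Icc_succ_top (by omega), show 2 * (e + 1) = k - 1 by omega,
        show k - 1 + 1 = k by omega]
    rw [Matrix.trace_fin_two, coeff_add, e00, e11, coeff_row0, coeff_row1,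
      cA, cB, cD, hsv, hsb]
    have hmm : B.coeff (e + 1 - 1) + Cc.coeff (e + 1)
        = s ^ 2 + ∑ n ∈ Finset.Icc 1 (2 * (e + 1)), β n := cS
    simp only [show e + 1 - 1 = e from rfl] at hmm
    linear_combination hmm
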